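/- arXiv:2011.06562 — 5 statements merged into one kernel-verified Lean document; each statement's English description precedes it below -/
import Mathlib

section
/- The set G is a subgroup of Sp(2n,ℝ): every element of G satisfies ψᵀJ_{2n}ψ = J_{2n}, the identity matrix lies in G, and G is closed under matrix multiplication and matrix inversion. -/
open Matrix

/-- The standard symplectic matrix `J_{2k}`: the `2k × 2k` block-diagonal matrix consisting of
`k` copies of the `2 × 2` block `[[0,-1],[1,0]]`. -/
def Jstd (k : ℕ) : Matrix (Fin (2 * k)) (Fin (2 * k)) ℝ :=
  Matrix.of fun i j =>
    if i.val = j.val + 1 ∧ j.val % 2 = 0 then 1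
    else if j.val = i.val + 1 ∧ i.val % 2 = 0 then -1
    else 0

/-- `J_{2n}` on the index set `Fin (2m) ⊕ Fin 2` (so `2n = 2m + 2`). -/
def Jsum (m : ℕ) : Matrix (Fin (2 * m) ⊕ Fin 2) (Fin (2 * m) ⊕ Fin 2) ℝ :=
  Matrix.fromBlocks (Jstd m) 0 0 !![0, -1; 1, 0]

/-- The interleaved vector `(X₁, Y₁, …, X_m, Y_m)` in `ℝ^{2m}`. -/
def interleave (m : ℕ) (X Y : Fin m → ℝ) : Fin (2 * m) → ℝ :=
  fun i =>
    if i.val % 2 = 0 then X ⟨i.val / 2, by have := i.isLt; omega⟩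
    else Y ⟨i.val / 2, by have := i.isLt; omega⟩

/-- The `(2m) × 2` block with prescribed first column and zero second column. -/
def colB (m : ℕ) (x : Fin (2 * m) → ℝ) : Matrix (Fin (2 * m)) (Fin 2) ℝ :=
  Matrix.of fun i j => if j = 0 then x i else 0

/-- The `2 × (2m)` block with zero first row and prescribed second row. -/
def rowC (m : ℕ) (w : Fin (2 * m) → ℝ) : Matrix (Fin 2) (Fin (2 * m)) ℝ :=
  Matrix.of fun i j => if i = 1 then w j else 0

/-- The set `G` of block matrices `[[M,B],[C,D]]` with `M ∈ Sp(2m, ℝ)`, `B` having first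
column `x = (x₁,y₁,…,x_m,y_m)ᵀ` and second column `0`, `C` having first row `0` and second
row `w = (u₁,v₁,…,u_m,v_m)`, `D = [[α,0],[β,α⁻¹]]` with `α > 0`, subject to the relation
`(−y₁,x₁,…,−y_m,x_m)·M + α·w = 0`. -/
def GSet (m : ℕ) : Set (Matrix (Fin (2 * m) ⊕ Fin 2) (Fin (2 * m) ⊕ Fin 2) ℝ) :=
  { ψ | ∃ (M : Matrix (Fin (2 * m)) (Fin (2 * m)) ℝ) (X Y U V : Fin m → ℝ) (α β : ℝ),
      Mᵀ * Jstd m * M = Jstd m ∧ 0 < α ∧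
      Matrix.vecMul (interleave m (fun t => -Y t) X) M + α • interleave m U V = 0 ∧
      ψ = Matrix.fromBlocks M (colB m (interleave m X Y))
            (rowC m (interleave m U V)) !![α, 0; β, α⁻¹] }


set_option linter.unreachableTactic false
set_option linter.unusedTactic false
set_option linter.unnecessarySeqFocus false

lemma Jstd_transpose (m : ℕ) : (Jstd m)ᵀ = -(Jstd m) := by
  ext i j
  rw [transpose_apply, neg_apply]
  simp only [Jstd, transpose_apply, neg_apply, of_apply]
  split_ifs <;> first | omega | norm_num

lemma vecMul_Jstd (m : ℕ) (v : Fin (2 * m) → ℝ) (j : Fin (2 * m)) :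
    Matrix.vecMul v (Jstd m) j =
      if h : j.val % 2 = 0 then v ⟨j.val + 1, by have := j.isLt; omega⟩
      else -v ⟨j.val - 1, by have := j.isLt; omega⟩ := by
  rw [Matrix.vecMul, dotProduct]
  split_ifs with h
  · rw [Finset.sum_eq_single (⟨j.val + 1, by have := j.isLt; omega⟩ : Fin (2*m))]
    · simp [Jstd, h]
    · intro b _ hb
      have hb' : (b : ℕ) ≠ j.val + 1 := fun hh => hb (Fin.ext hh)
      simp only [Jstd, of_apply]
      rw [if_neg (fun hc => hb' hc.1), if_neg (by omega), mul_zero]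
    · simp
  · rw [Finset.sum_eq_single (⟨j.val - 1, by have := j.isLt; omega⟩ : Fin (2*m))]
    · simp only [Jstd, of_apply]
      rw [if_neg (show ¬((j : ℕ) - 1 = (j : ℕ) + 1 ∧ (j : ℕ) % 2 = 0) by omega),
        if_pos (⟨by omega, by omega⟩ : (j : ℕ) = (j : ℕ) - 1 + 1 ∧ ((j : ℕ) - 1) % 2 = 0)]
      ring
    · intro b _ hb
      have hb' : (b : ℕ) ≠ j.val - 1 := fun hh => hb (Fin.ext hh)
      simp only [Jstd, of_apply]
      rw [if_neg (by omega), if_neg (by omega), mul_zero]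
    · simp
lemma Jsq (m : ℕ) : Jstd m * Jstd m = -1 := by
  ext i j
  have e : (Jstd m * Jstd m) i j = Matrix.vecMul (fun k => Jstd m i k) (Jstd m) j := by
    rw [Matrix.mul_apply, Matrix.vecMul, dotProduct]
  rw [e, vecMul_Jstd]
  simp only [Jstd, of_apply, Matrix.neg_apply, Matrix.one_apply]
  split_ifs <;> first | omega | norm_num | (simp_all [Fin.ext_iff]; omega)

lemma vecMul_J_dot_self (m : ℕ) (x : Fin (2 * m) → ℝ) :
    Matrix.vecMul x (Jstd m) ⬝ᵥ x = 0 := by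
  have h1 : x ⬝ᵥ (Jstd m *ᵥ x) = Matrix.vecMul x (Jstd m) ⬝ᵥ x := dotProduct_mulVec _ _ _
  have h2 : Jstd m *ᵥ x = -Matrix.vecMul x (Jstd m) := by
    have := Matrix.mulVec_transpose (Jstd m)ᵀ x
    rw [Matrix.transpose_transpose] at this
    rw [this, Jstd_transpose, Matrix.vecMul_neg]
  rw [h2] at h1
  have h3 : x ⬝ᵥ -Matrix.vecMul x (Jstd m) = -(Matrix.vecMul x (Jstd m) ⬝ᵥ x) := by
    rw [dotProduct_neg, dotProduct_comm]
  rw [h3] at h1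
  linarith

lemma interleave_neg (m : ℕ) (X Y : Fin m → ℝ) :
    interleave m (fun t => -Y t) X = -Matrix.vecMul (interleave m X Y) (Jstd m) := by
  funext j
  rw [Pi.neg_apply, vecMul_Jstd]
  by_cases h : (j : ℕ) % 2 = 0
  · rw [dif_pos h]
    simp only [interleave]
    rw [if_pos h, if_neg (show ¬((⟨(j:ℕ)+1, by have := j.isLt; omega⟩ : Fin (2*m)) : ℕ) % 2 = 0 from by
      show ¬((j:ℕ)+1) % 2 = 0; omega)]
    rw [neg_inj]
    congr 1
    exact Fin.ext (show (j:ℕ)/2 = ((j:ℕ)+1)/2 from by omega)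
  · rw [dif_neg h]
    simp only [interleave]
    rw [if_neg h, if_pos (show ((⟨(j:ℕ)-1, by have := j.isLt; omega⟩ : Fin (2*m)) : ℕ) % 2 = 0 from by
      show ((j:ℕ)-1) % 2 = 0; omega)]
    rw [neg_neg]
    congr 1
    exact Fin.ext (show (j:ℕ)/2 = ((j:ℕ)-1)/2 from by omega)

lemma interleave_eo (m : ℕ) (v : Fin (2 * m) → ℝ) :
    interleave m (fun t => v ⟨2 * t.val, by have := t.isLt; omega⟩)
      (fun t => v ⟨2 * t.val + 1, by have := t.isLt; omega⟩) = v := by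
  funext i
  simp only [interleave]
  split_ifs with h
  · congr 1
    exact Fin.ext (show 2 * ((i:ℕ)/2) = (i:ℕ) from by omega)
  · congr 1
    exact Fin.ext (show 2 * ((i:ℕ)/2) + 1 = (i:ℕ) from by omega)
def rowA (m : ℕ) (x : Fin (2 * m) → ℝ) : Matrix (Fin 2) (Fin (2 * m)) ℝ :=
  Matrix.of fun i j => if i = 0 then x j else 0

def colD (m : ℕ) (w : Fin (2 * m) → ℝ) : Matrix (Fin (2 * m)) (Fin 2) ℝ :=
  Matrix.of fun i j => if j = 1 then w i else 0

lemma colB_mul_rowC (m : ℕ) (x w : Fin (2 * m) → ℝ) : colB m x * rowC m w = 0 := by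
  ext i j
  simp [Matrix.mul_apply, Fin.sum_univ_two, colB, rowC]

lemma mul_colB (m : ℕ) (M : Matrix (Fin (2 * m)) (Fin (2 * m)) ℝ) (x : Fin (2 * m) → ℝ) :
    M * colB m x = colB m (M *ᵥ x) := by
  ext i j
  by_cases h : j = 0 <;> simp [Matrix.mul_apply, colB, h, Matrix.mulVec, dotProduct]

lemma colB_mul_D (m : ℕ) (x : Fin (2 * m) → ℝ) (a b c : ℝ) :
    colB m x * !![a, 0; b, c] = colB m (a • x) := by
  ext i j
  fin_cases j <;> simp [Matrix.mul_apply, Fin.sum_univ_two, colB, mul_comm]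

lemma rowC_mul (m : ℕ) (w : Fin (2 * m) → ℝ) (M : Matrix (Fin (2 * m)) (Fin (2 * m)) ℝ) :
    rowC m w * M = rowC m (Matrix.vecMul w M) := by
  ext i j
  by_cases h : i = 1 <;> simp [Matrix.mul_apply, rowC, h, Matrix.vecMul, dotProduct]

lemma D_mul_rowC (m : ℕ) (a b c : ℝ) (w : Fin (2 * m) → ℝ) :
    !![a, 0; b, c] * rowC m w = rowC m (c • w) := by
  ext i j
  fin_cases i <;> simp [Matrix.mul_apply, Fin.sum_univ_two, rowC]

lemma rowC_mul_colB (m : ℕ) (w x : Fin (2 * m) → ℝ) :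
    rowC m w * colB m x = !![0, 0; w ⬝ᵥ x, 0] := by
  ext i j
  fin_cases i <;> fin_cases j <;>
    simp [Matrix.mul_apply, rowC, colB, dotProduct]

lemma colB_transpose (m : ℕ) (x : Fin (2 * m) → ℝ) : (colB m x)ᵀ = rowA m x := by
  ext i j
  simp [colB, rowA]

lemma rowC_transpose (m : ℕ) (w : Fin (2 * m) → ℝ) : (rowC m w)ᵀ = colD m w := by
  ext i j
  simp [rowC, colD]

lemma rowA_mul (m : ℕ) (x : Fin (2 * m) → ℝ) (M : Matrix (Fin (2 * m)) (Fin (2 * m)) ℝ) :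
    rowA m x * M = rowA m (Matrix.vecMul x M) := by
  ext i j
  by_cases h : i = 0 <;> simp [Matrix.mul_apply, rowA, h, Matrix.vecMul, dotProduct]

lemma E_mul_rowC (m : ℕ) (a b c : ℝ) (w : Fin (2 * m) → ℝ) :
    !![a, b; c, 0] * rowC m w = rowA m (b • w) := by
  ext i j
  fin_cases i <;> simp [Matrix.mul_apply, Fin.sum_univ_two, rowC, rowA]

lemma rowA_mul_colB (m : ℕ) (u x : Fin (2 * m) → ℝ) :
    rowA m u * colB m x = !![u ⬝ᵥ x, 0; 0, 0] := by
  ext i j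
  fin_cases i <;> fin_cases j <;>
    simp [Matrix.mul_apply, rowA, colB, dotProduct]

lemma colD_mul_J2 (m : ℕ) (w : Fin (2 * m) → ℝ) :
    colD m w * (!![0, -1; 1, 0] : Matrix (Fin 2) (Fin 2) ℝ) = colB m w := by
  ext i j
  fin_cases j <;> simp [Matrix.mul_apply, Fin.sum_univ_two, colD, colB]

lemma colB_add (m : ℕ) (x y : Fin (2 * m) → ℝ) : colB m x + colB m y = colB m (x + y) := by
  ext i j
  by_cases h : j = 0 <;> simp [colB, h]

lemma rowC_add (m : ℕ) (x y : Fin (2 * m) → ℝ) : rowC m x + rowC m y = rowC m (x + y) := by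
  ext i j
  by_cases h : i = 1 <;> simp [rowC, h]

lemma rowA_add (m : ℕ) (x y : Fin (2 * m) → ℝ) : rowA m x + rowA m y = rowA m (x + y) := by
  ext i j
  by_cases h : i = 0 <;> simp [rowA, h]

lemma colB_zero (m : ℕ) : colB m 0 = 0 := by
  ext i j; simp [colB]

lemma rowC_zero (m : ℕ) : rowC m 0 = 0 := by
  ext i j; simp [rowC]

lemma rowA_zero (m : ℕ) : rowA m 0 = 0 := by
  ext i j; simp [rowA]
lemma mem_GSet_iff (m : ℕ) (ψ : Matrix (Fin (2 * m) ⊕ Fin 2) (Fin (2 * m) ⊕ Fin 2) ℝ) :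
    ψ ∈ GSet m ↔ ∃ (M : Matrix (Fin (2 * m)) (Fin (2 * m)) ℝ) (x w : Fin (2 * m) → ℝ)
      (α β : ℝ),
      Mᵀ * Jstd m * M = Jstd m ∧ 0 < α ∧
      Matrix.vecMul x (Jstd m * M) = α • w ∧
      ψ = Matrix.fromBlocks M (colB m x) (rowC m w) !![α, 0; β, α⁻¹] := by
  constructor
  · rintro ⟨M, X, Y, U, V, α, β, hM, hα, hrel, rfl⟩
    refine ⟨M, interleave m X Y, interleave m U V, α, β, hM, hα, ?_, rfl⟩
    rw [interleave_neg, Matrix.neg_vecMul, Matrix.vecMul_vecMul] at hrel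
    exact neg_add_eq_zero.mp hrel
  · rintro ⟨M, x, w, α, β, hM, hα, hrel, rfl⟩
    refine ⟨M, (fun t => x ⟨2 * t.val, by have := t.isLt; omega⟩),
      (fun t => x ⟨2 * t.val + 1, by have := t.isLt; omega⟩),
      (fun t => w ⟨2 * t.val, by have := t.isLt; omega⟩),
      (fun t => w ⟨2 * t.val + 1, by have := t.isLt; omega⟩), α, β, hM, hα, ?_, ?_⟩
    · rw [interleave_neg, interleave_eo, interleave_eo, Matrix.neg_vecMul,
        Matrix.vecMul_vecMul, hrel, neg_add_cancel]
    · rw [interleave_eo, interleave_eo]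
lemma transpose_fin2 (a b c d : ℝ) : (!![a, b; c, d])ᵀ = !![a, c; b, d] := by
  ext i j; fin_cases i <;> fin_cases j <;> simp

lemma GSet_sp (m : ℕ) : ∀ ψ ∈ GSet m, ψᵀ * Jsum m * ψ = Jsum m := by
  intro ψ hψ
  rw [mem_GSet_iff] at hψ
  obtain ⟨M, x, w, α, β, hM, hα, hrel, rfl⟩ := hψ
  have hα' : α ≠ 0 := ne_of_gt hα
  rw [Jsum, Matrix.fromBlocks_transpose, Matrix.fromBlocks_multiply, Matrix.fromBlocks_multiply]
  rw [colB_transpose, rowC_transpose, transpose_fin2]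
  rw [Matrix.mul_zero, Matrix.mul_zero, Matrix.mul_zero, Matrix.mul_zero,
    add_zero, add_zero, zero_add, zero_add]
  rw [colD_mul_J2]
  have hD2 : !![α, β; 0, α⁻¹] * !![0, -1; 1, 0] = !![β, -α; α⁻¹, 0] := by
    rw [Matrix.mul_fin_two]; norm_num
  rw [hD2]
  have hTL : Mᵀ * Jstd m * M + colB m w * rowC m w = Jstd m := by
    rw [colB_mul_rowC, hM, add_zero]
  have hTR : Mᵀ * Jstd m * colB m x + colB m w * !![α, 0; β, α⁻¹] = 0 := by
    rw [Matrix.mul_assoc, mul_colB, mul_colB, colB_mul_D, colB_add]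
    have hv : Mᵀ *ᵥ (Jstd m *ᵥ x) = -(α • w) := by
      rw [Matrix.mulVec_transpose]
      have hx : Jstd m *ᵥ x = -(Matrix.vecMul x (Jstd m)) := by
        have h := Matrix.mulVec_transpose (Jstd m)ᵀ x
        rw [Matrix.transpose_transpose] at h
        rw [h, Jstd_transpose, Matrix.vecMul_neg]
      rw [hx, Matrix.neg_vecMul, Matrix.vecMul_vecMul, hrel]
    rw [hv, neg_add_cancel, colB_zero]
  have hBL : rowA m x * Jstd m * M + !![β, -α; α⁻¹, 0] * rowC m w = 0 := by
    rw [rowA_mul, rowA_mul, E_mul_rowC, rowA_add, Matrix.vecMul_vecMul, hrel]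
    have : α • w + (-α) • w = 0 := by
      rw [neg_smul, add_neg_cancel]
    rw [this, rowA_zero]
  have hBR : rowA m x * Jstd m * colB m x + !![β, -α; α⁻¹, 0] * !![α, 0; β, α⁻¹] =
      !![0, -1; 1, 0] := by
    rw [rowA_mul, rowA_mul_colB, vecMul_J_dot_self, Matrix.mul_fin_two]
    ext i j
    fin_cases i <;> fin_cases j <;> simp <;> field_simp <;> ring
  rw [hTL, hTR, hBL, hBR]
lemma GSet_one (m : ℕ) :
    (1 : Matrix (Fin (2 * m) ⊕ Fin 2) (Fin (2 * m) ⊕ Fin 2) ℝ) ∈ GSet m := by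
  rw [mem_GSet_iff]
  refine ⟨1, 0, 0, 1, 0, by simp, one_pos, by simp, ?_⟩
  rw [colB_zero, rowC_zero]
  rw [show !![(1:ℝ), 0; 0, 1⁻¹] = 1 by rw [inv_one]; exact Matrix.one_fin_two.symm]
  exact Matrix.fromBlocks_one.symm

lemma GSet_mul (m : ℕ) : ∀ ψ ∈ GSet m, ∀ φ ∈ GSet m, ψ * φ ∈ GSet m := by
  intro ψ hψ φ hφ
  rw [mem_GSet_iff] at hψ hφ ⊢
  obtain ⟨M, x, w, α, β, hM, hα, hrel, rfl⟩ := hψ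
  obtain ⟨M', x', w', α', β', hM', hα', hrel', rfl⟩ := hφ
  have hαne : α ≠ 0 := ne_of_gt hα
  refine ⟨M * M', M *ᵥ x' + α' • x, Matrix.vecMul w M' + α⁻¹ • w', α * α',
    w ⬝ᵥ x' + (β * α' + α⁻¹ * β'), ?_, mul_pos hα hα', ?_, ?_⟩
  · rw [Matrix.transpose_mul]
    have e : M'ᵀ * Mᵀ * Jstd m * (M * M') = M'ᵀ * (Mᵀ * Jstd m * M) * M' := by
      simp only [Matrix.mul_assoc]
    rw [e, hM, hM']
  · rw [Matrix.add_vecMul, Matrix.smul_vecMul]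
    rw [show M *ᵥ x' = Matrix.vecMul x' Mᵀ from (Matrix.vecMul_transpose M x').symm]
    rw [Matrix.vecMul_vecMul]
    have e1 : Mᵀ * (Jstd m * (M * M')) = Jstd m * M' := by
      rw [show Mᵀ * (Jstd m * (M * M')) = (Mᵀ * Jstd m * M) * M' by simp only [Matrix.mul_assoc],
        hM]
    rw [e1, hrel']
    rw [show Jstd m * (M * M') = (Jstd m * M) * M' from (Matrix.mul_assoc _ _ _).symm]
    rw [← Matrix.vecMul_vecMul, hrel, Matrix.smul_vecMul]
    rw [smul_add, smul_smul, smul_smul]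
    rw [show α * α' * α⁻¹ = α' by rw [mul_comm α α', mul_assoc, mul_inv_cancel₀ hαne, mul_one], show α' * α = α * α' from mul_comm _ _]
    exact add_comm _ _
  · rw [Matrix.fromBlocks_multiply, colB_mul_rowC, add_zero, mul_colB, colB_mul_D, colB_add,
      rowC_mul, D_mul_rowC, rowC_add, rowC_mul_colB, Matrix.mul_fin_two]
    rw [Matrix.fromBlocks_inj]
    refine ⟨rfl, rfl, rfl, ?_⟩
    ext i j
    fin_cases i <;> fin_cases j <;> simp [mul_inv] <;> ring

lemma GSet_inv (m : ℕ) : ∀ ψ ∈ GSet m, ψ⁻¹ ∈ GSet m := by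
  intro ψ hψ
  rw [mem_GSet_iff] at hψ ⊢
  obtain ⟨M, x, w, α, β, hM, hα, hrel, rfl⟩ := hψ
  have hαne : α ≠ 0 := ne_of_gt hα
  have hJJ : Jstd m * Jstd m = -1 := Jsq m
  set N : Matrix (Fin (2 * m)) (Fin (2 * m)) ℝ := -(Jstd m * Mᵀ * Jstd m) with hN
  have hNM : N * M = 1 := by
    have h1 : N * M = -(Jstd m * (Mᵀ * Jstd m * M)) := by
      rw [hN]; simp only [Matrix.neg_mul, Matrix.mul_assoc]
    rw [h1, hM, hJJ, neg_neg]
  have hMN : M * N = 1 := mul_eq_one_comm.mp hNM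
  have hMJM : M * Jstd m * Mᵀ = Jstd m := by
    have h2 : -(M * (Jstd m * Mᵀ * Jstd m)) = 1 := by
      rw [← hMN, hN]; simp only [Matrix.mul_neg, Matrix.mul_assoc]
    have h3 : M * (Jstd m * Mᵀ * Jstd m) = -1 := neg_eq_iff_eq_neg.mp h2
    have hJJ' : Jstd m * -(Jstd m) = 1 := by rw [Matrix.mul_neg, hJJ, neg_neg]
    calc M * Jstd m * Mᵀ = M * Jstd m * Mᵀ * 1 := by rw [Matrix.mul_one]
      _ = M * Jstd m * Mᵀ * (Jstd m * -(Jstd m)) := by rw [hJJ']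
      _ = (M * (Jstd m * Mᵀ * Jstd m)) * -(Jstd m) := by simp only [Matrix.mul_assoc]
      _ = -1 * -(Jstd m) := by rw [h3]
      _ = Jstd m := by simp
  have hNt : Nᵀ = -(Jstd m * M * Jstd m) := by
    rw [hN]
    simp only [Matrix.transpose_neg, Matrix.transpose_mul, Jstd_transpose,
      Matrix.transpose_transpose, Matrix.neg_mul, Matrix.mul_neg, neg_neg, Matrix.mul_assoc]
  have hNJN : Nᵀ * Jstd m * N = Jstd m := by
    rw [hNt, hN]
    have e : -(Jstd m * M * Jstd m) * Jstd m * -(Jstd m * Mᵀ * Jstd m) =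
        Jstd m * (M * (Jstd m * (Jstd m * (Jstd m * (Mᵀ * Jstd m))))) := by
      simp only [Matrix.neg_mul, Matrix.mul_neg, neg_neg, Matrix.mul_assoc]
    have hJJ2 : ∀ A : Matrix (Fin (2 * m)) (Fin (2 * m)) ℝ,
        Jstd m * (Jstd m * A) = -A := by
      intro A; rw [← Matrix.mul_assoc, hJJ, neg_one_mul]
    rw [e, hJJ2 (Mᵀ * Jstd m), Matrix.mul_neg, Matrix.mul_neg]
    have e2 : M * (Jstd m * (Mᵀ * Jstd m)) = Jstd m * Jstd m := by
      rw [show M * (Jstd m * (Mᵀ * Jstd m)) = (M * Jstd m * Mᵀ) * Jstd m by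
        simp only [Matrix.mul_assoc], hMJM]
    rw [e2, hJJ]; simp
  have hw : Matrix.vecMul w N = α⁻¹ • Matrix.vecMul x (Jstd m) := by
    have hw0 : w = α⁻¹ • Matrix.vecMul x (Jstd m * M) := by
      rw [hrel, smul_smul, inv_mul_cancel₀ hαne, one_smul]
    rw [hw0, Matrix.smul_vecMul, Matrix.vecMul_vecMul, Matrix.mul_assoc, hMN, Matrix.mul_one]
  set x' : Fin (2 * m) → ℝ := -(α⁻¹ • (N *ᵥ x)) with hx'
  set w' : Fin (2 * m) → ℝ := -(α • Matrix.vecMul w N) with hw'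
  have hTRv : M *ᵥ x' + α⁻¹ • x = 0 := by
    rw [hx', Matrix.mulVec_neg, Matrix.mulVec_smul, Matrix.mulVec_mulVec, hMN,
      Matrix.one_mulVec, neg_add_cancel]
  have hBLv : Matrix.vecMul w N + α⁻¹ • w' = 0 := by
    rw [hw', smul_neg, smul_smul, inv_mul_cancel₀ hαne, one_smul, add_neg_cancel]
  have hdot : w ⬝ᵥ x' = 0 := by
    rw [hx', dotProduct_neg, dotProduct_smul, dotProduct_mulVec, hw, smul_dotProduct,
      vecMul_J_dot_self]
    simp
  have hinv : Matrix.fromBlocks M (colB m x) (rowC m w) !![α, 0; β, α⁻¹] *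
      Matrix.fromBlocks N (colB m x') (rowC m w') !![α⁻¹, 0; -β, α] = 1 := by
    rw [Matrix.fromBlocks_multiply, colB_mul_rowC, add_zero, hMN, mul_colB, colB_mul_D,
      colB_add, rowC_mul, D_mul_rowC, rowC_add, rowC_mul_colB, Matrix.mul_fin_two,
      hTRv, hBLv, hdot, colB_zero, rowC_zero]
    conv_rhs => rw [show (1 : Matrix (Fin (2 * m) ⊕ Fin 2) (Fin (2 * m) ⊕ Fin 2) ℝ) =
      Matrix.fromBlocks (1 : Matrix (Fin (2 * m)) (Fin (2 * m)) ℝ) 0 0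
        (1 : Matrix (Fin 2) (Fin 2) ℝ) from Matrix.fromBlocks_one.symm]
    rw [Matrix.fromBlocks_inj]
    refine ⟨rfl, rfl, rfl, ?_⟩
    ext i j
    fin_cases i <;> fin_cases j <;> simp [Matrix.one_fin_two] <;> field_simp <;> ring
  rw [Matrix.inv_eq_right_inv hinv]
  refine ⟨N, x', w', α⁻¹, -β, hNJN, inv_pos.mpr hα, ?_, ?_⟩
  · rw [hx', hw', Matrix.neg_vecMul, Matrix.smul_vecMul]
    rw [show N *ᵥ x = Matrix.vecMul x Nᵀ from (Matrix.vecMul_transpose N x).symm]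
    rw [Matrix.vecMul_vecMul]
    have e3 : Nᵀ * (Jstd m * N) = Jstd m := by rw [← Matrix.mul_assoc, hNJN]
    rw [e3, smul_neg, smul_smul, inv_mul_cancel₀ hαne, one_smul, hw]
  · rw [inv_inv]


/-- `G` is a subgroup of `Sp(2n, ℝ)`: every element of `G` satisfies `ψᵀ J_{2n} ψ = J_{2n}`,
the identity lies in `G`, and `G` is closed under matrix multiplication and inversion.
Here `2n = 2(n-1) + 2` and `n ≥ 2`. -/
theorem G_is_subgroup_of_Sp (n : ℕ) (hn : 2 ≤ n) :
    (∀ ψ ∈ GSet (n - 1), ψᵀ * Jsum (n - 1) * ψ = Jsum (n - 1)) ∧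
    ((1 : Matrix (Fin (2 * (n - 1)) ⊕ Fin 2) (Fin (2 * (n - 1)) ⊕ Fin 2) ℝ) ∈ GSet (n - 1)) ∧
    (∀ ψ ∈ GSet (n - 1), ∀ φ ∈ GSet (n - 1), ψ * φ ∈ GSet (n - 1)) ∧
    (∀ ψ ∈ GSet (n - 1), ψ⁻¹ ∈ GSet (n - 1)) := by
  exact ⟨GSet_sp (n - 1), GSet_one (n - 1), GSet_mul (n - 1), GSet_inv (n - 1)⟩
end

section
/- The map π is exactly two-to-one up to sign: for all z = (z₀,z₁) and z' = (z₀',z₁') in ℂ², one has π(z) = π(z') if and only if z' = z or z' = −z. -/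
open Complex

/-- The map `π : ℂ² → ℂ³`, `π(z₀,z₁) = (√2·z₀z₁, z₀², −i·z₁²)`. -/
noncomputable def brPi (z : ℂ × ℂ) : ℂ × ℂ × ℂ :=
  ((Real.sqrt 2 : ℂ) * z.1 * z.2, z.1 ^ 2, -Complex.I * z.2 ^ 2)

/-- The map `π` is exactly two-to-one up to sign: for all `z, z' ∈ ℂ²`, one has
`π(z) = π(z')` if and only if `z' = z` or `z' = −z`. -/
theorem brPi_two_to_one (z z' : ℂ × ℂ) :
    brPi z = brPi z' ↔ z' = z ∨ z' = -z := by
  obtain ⟨a, b⟩ := z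
  obtain ⟨c, d⟩ := z'
  simp only [brPi, Prod.mk.injEq, Prod.neg_mk, Prod.ext_iff]
  constructor
  · rintro ⟨h1, h2, h3⟩
    have hs : (Real.sqrt 2 : ℂ) ≠ 0 := by
      simp only [ne_eq, Complex.ofReal_eq_zero]; exact Real.sqrt_ne_zero'.mpr (by norm_num : (0:ℝ) < 2)
    have h1' : a * b = c * d := by
      have := mul_left_cancel₀ hs (by linear_combination h1 : (Real.sqrt 2 : ℂ) * (a * b) = (Real.sqrt 2 : ℂ) * (c * d))
      exact this
    have h2' : a = c ∨ a = -c := sq_eq_sq_iff_eq_or_eq_neg.mp h2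
    have h3' : b = d ∨ b = -d := by
      have : b ^ 2 = d ^ 2 := by
        have hI : (-Complex.I) ≠ 0 := by simp [Complex.I_ne_zero]
        exact mul_left_cancel₀ hI h3
      exact sq_eq_sq_iff_eq_or_eq_neg.mp this
    rcases h2' with h2' | h2' <;> rcases h3' with h3' | h3'
    · exact Or.inl ⟨h2'.symm, h3'.symm⟩
    · have hcd : (2 : ℂ) * (c * d) = 0 := by
        rw [h2', h3'] at h1'; linear_combination -h1'
      rcases mul_eq_zero.mp ((mul_eq_zero.mp hcd).resolve_left two_ne_zero) with h | h
      · exact Or.inr ⟨by rw [h2', h]; ring, by rw [h3']; ring⟩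
      · exact Or.inl ⟨h2'.symm, by rw [h3', h]; ring⟩
    · have hcd : (2 : ℂ) * (c * d) = 0 := by
        rw [h2', h3'] at h1'; linear_combination -h1'
      rcases mul_eq_zero.mp ((mul_eq_zero.mp hcd).resolve_left two_ne_zero) with h | h
      · exact Or.inl ⟨by rw [h2', h]; ring, h3'.symm⟩
      · exact Or.inr ⟨by rw [h2']; ring, by rw [h3', h]; ring⟩
    · exact Or.inr ⟨by rw [h2']; ring, by rw [h3']; ring⟩
  · rintro (⟨rfl, rfl⟩ | ⟨rfl, rfl⟩) <;> refine ⟨by ring, by ring, by ring⟩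
end

section
/- The map π maps the unit 3-sphere onto the Brieskorn sphere: for every w = (w₁,w₂,w₃) ∈ ℂ³ with w₁² − 2i·w₂w₃ = 0 and |w₁|² + |w₂|² + |w₃|² = 1, there exists (z₀,z₁) ∈ ℂ² with |z₀|² + |z₁|² = 1 and π(z₀,z₁) = w. -/
open Complex

/- Take square roots `a` of `w₂` and `b` of `i·w₃`. Then `π(a, b)` has the last two coordinates of
`w`, and its first coordinate squares to `2i·w₂w₃ = w₁²`, so replacing `b` by `-b` if necessary
gives `π(a, b) = w`. Finally `|a|² + |b|² = |w₂| + |w₃|`, and the equation `|w₁|² = 2|w₂||w₃|`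
turns `|w₁|² + |w₂|² + |w₃|² = 1` into `(|w₂| + |w₃|)² = 1`. -/

theorem brPi_fst_sq (z : ℂ × ℂ) :
    (brPi z).1 ^ 2 = 2 * I * (brPi z).2.1 * (brPi z).2.2 := by
  have hs : ((Real.sqrt 2 : ℝ) : ℂ) ^ 2 = 2 := by
    norm_cast; exact Real.sq_sqrt zero_le_two
  simp only [brPi]
  linear_combination (z.1 * z.2) ^ 2 * hs + 2 * z.1 ^ 2 * z.2 ^ 2 * I_sq

theorem brPi_neg_snd (z : ℂ × ℂ) : brPi (z.1, -z.2) = (-(brPi z).1, (brPi z).2) := by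
  simp only [brPi, neg_sq, mul_neg]

theorem exists_brPi_snd_eq (u v : ℂ) :
    ∃ z : ℂ × ℂ, (brPi z).2 = (u, v) ∧ ‖z.1‖ ^ 2 + ‖z.2‖ ^ 2 = ‖u‖ + ‖v‖ := by
  obtain ⟨a, ha⟩ := IsAlgClosed.exists_pow_nat_eq u two_pos
  obtain ⟨b, hb⟩ := IsAlgClosed.exists_pow_nat_eq (I * v) two_pos
  refine ⟨(a, b), Prod.ext ha ?_, ?_⟩
  · change -I * b ^ 2 = v
    linear_combination -I * hb - v * I_sq
  · rw [← norm_pow, ← norm_pow, ha, hb, norm_mul, norm_I, one_mul]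

theorem exists_brPi_eq (w : ℂ × ℂ × ℂ) (h : w.1 ^ 2 - 2 * I * w.2.1 * w.2.2 = 0) :
    ∃ z : ℂ × ℂ, brPi z = w ∧ ‖z.1‖ ^ 2 + ‖z.2‖ ^ 2 = ‖w.2.1‖ + ‖w.2.2‖ := by
  obtain ⟨z, hz, hnorm⟩ := exists_brPi_snd_eq w.2.1 w.2.2
  have hsq : (brPi z).1 ^ 2 = w.1 ^ 2 := by
    rw [brPi_fst_sq, hz]
    linear_combination -h
  rcases sq_eq_sq_iff_eq_or_eq_neg.mp hsq with hpos | hneg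
  · exact ⟨z, Prod.ext hpos hz, hnorm⟩
  · refine ⟨(z.1, -z.2), ?_, by simpa using hnorm⟩
    rw [brPi_neg_snd, hneg, neg_neg, hz]

theorem sq_norm_add_norm_eq {x y z : ℂ} (h : x ^ 2 - 2 * I * y * z = 0) :
    (‖y‖ + ‖z‖) ^ 2 = ‖x‖ ^ 2 + ‖y‖ ^ 2 + ‖z‖ ^ 2 := by
  have hx : ‖x‖ ^ 2 = 2 * ‖y‖ * ‖z‖ := by
    rw [← norm_pow, sub_eq_zero.mp h]
    simp
  rw [hx]
  ring

/-- The map `π` maps the unit `3`-sphere onto the Brieskorn sphere: for every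
`w = (w₁,w₂,w₃) ∈ ℂ³` with `w₁² − 2i·w₂w₃ = 0` and `|w₁|² + |w₂|² + |w₃|² = 1`, there is
`(z₀,z₁) ∈ ℂ²` with `|z₀|² + |z₁|² = 1` and `π(z₀,z₁) = w`. -/
theorem brPi_surjective_onto_brieskorn (w : ℂ × ℂ × ℂ)
    (h1 : w.1 ^ 2 - 2 * Complex.I * w.2.1 * w.2.2 = 0)
    (h2 : ‖w.1‖ ^ 2 + ‖w.2.1‖ ^ 2 + ‖w.2.2‖ ^ 2 = 1) :
    ∃ z : ℂ × ℂ, ‖z.1‖ ^ 2 + ‖z.2‖ ^ 2 = 1 ∧ brPi z = w := by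
  obtain ⟨z, hz, hnorm⟩ := exists_brPi_eq w h1
  have hsum : ‖w.2.1‖ + ‖w.2.2‖ = 1 := by
    have hsq : (‖w.2.1‖ + ‖w.2.2‖) ^ 2 = 1 ^ 2 := by rw [sq_norm_add_norm_eq h1, h2, one_pow]
    exact (pow_left_inj₀ (by positivity) zero_le_one two_ne_zero).mp hsq
  exact ⟨z, hnorm.trans hsum, hz⟩
end

section
/- For every ε ∈ (−1,1), every z = (z₀,z₁) ∈ ℂ² \ {0}, and every v = (v₀,v₁) ∈ ℂ², the pullback identity α_ε(π(z))(Dπ(z)·v) = (2 / ((1+ε)|z₀|² + (1−ε)|z₁|²)) · ( Im(conj(z₀)·v₀) + Im(conj(z₁)·v₁) ) holds, where Dπ(z) denotes the Fréchet derivative of π at z (over ℝ). -/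
/-! The identity `∑ⱼ conj πⱼ(z) · Dπ(z)vⱼ = 2|z|² (conj z₀ v₀ + conj z₁ v₁)` holds already
over `ℂ` (π is homogeneous quadratic and `|π(z)|² = |z|⁴`), while
`H_ε(π z) = |z|² ((1+ε)|z₀|² + (1−ε)|z₁|²)`; taking imaginary parts, the factor `|z|²` cancels. -/

open Complex

/-- `H_ε(w) = |w₁|² + |w₂|² + |w₃|² + ε(|w₂|² − |w₃|²)`. -/
noncomputable def Heps (ε : ℝ) (w : ℂ × ℂ × ℂ) : ℝ :=
  ‖w.1‖ ^ 2 + ‖w.2.1‖ ^ 2 + ‖w.2.2‖ ^ 2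
    + ε * (‖w.2.1‖ ^ 2 - ‖w.2.2‖ ^ 2)

/-- The `1`-form `α_ε(w)(u) = H_ε(w)⁻¹·∑_{j=1}^3 Im(conj(w_j)·u_j)`. -/
noncomputable def alphaEps (ε : ℝ) (w u : ℂ × ℂ × ℂ) : ℝ :=
  (Heps ε w)⁻¹ *
    (((starRingEnd ℂ) w.1 * u.1).im + ((starRingEnd ℂ) w.2.1 * u.2.1).im
      + ((starRingEnd ℂ) w.2.2 * u.2.2).im)

open ComplexConjugate

theorem fderiv_brPi_apply (z v : ℂ × ℂ) :
    fderiv ℝ brPi z v = ((Real.sqrt 2 : ℂ) * (v.1 * z.2 + z.1 * v.2),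
      2 * z.1 * v.1, -I * (2 * z.2 * v.2)) := by
  have hfst : HasFDerivAt (𝕜 := ℝ) Prod.fst (ContinuousLinearMap.fst ℝ ℂ ℂ) z :=
    hasFDerivAt_fst
  have hsnd : HasFDerivAt (𝕜 := ℝ) Prod.snd (ContinuousLinearMap.snd ℝ ℂ ℂ) z :=
    hasFDerivAt_snd
  have h := ((hfst.const_mul (Real.sqrt 2 : ℂ)).mul hsnd).prodMk
    ((hfst.pow 2).prodMk ((hsnd.pow 2).const_mul (-I)))
  rw [(show HasFDerivAt brPi _ z from h).fderiv]
  simp only [Nat.add_one_sub_one, pow_one, nsmul_eq_mul, Nat.cast_ofNat,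
    ContinuousLinearMap.prod_apply, add_apply, smul_apply,
    ContinuousLinearMap.coe_fst', ContinuousLinearMap.coe_snd', smul_eq_mul, neg_mul, Prod.mk.injEq,
    and_true]
  ring

theorem Heps_brPi (ε : ℝ) (z : ℂ × ℂ) :
    Heps ε (brPi z) =
      (‖z.1‖ ^ 2 + ‖z.2‖ ^ 2) * ((1 + ε) * ‖z.1‖ ^ 2 + (1 - ε) * ‖z.2‖ ^ 2) := by
  simp only [Heps, brPi, norm_mul, norm_pow, norm_neg, norm_I, norm_real,
    Real.norm_of_nonneg (Real.sqrt_nonneg 2)]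
  ring_nf
  rw [Real.sq_sqrt zero_le_two]
  ring

theorem conj_brPi_mul_fderiv_brPi (z v : ℂ × ℂ) :
    conj (brPi z).1 * (fderiv ℝ brPi z v).1 + conj (brPi z).2.1 * (fderiv ℝ brPi z v).2.1
      + conj (brPi z).2.2 * (fderiv ℝ brPi z v).2.2
      = (2 * (‖z.1‖ ^ 2 + ‖z.2‖ ^ 2) : ℝ) * (conj z.1 * v.1 + conj z.2 * v.2) := by
  have hsqrt : (Real.sqrt 2 : ℂ) * Real.sqrt 2 = 2 := by
    rw [← ofReal_mul, Real.mul_self_sqrt zero_le_two, ofReal_ofNat]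
  simp only [fderiv_brPi_apply, brPi, map_mul, map_pow, map_neg, conj_I, conj_ofReal]
  push_cast
  linear_combination
    2 * (conj z.1 * v.1 + conj z.2 * v.2) * (conj_mul' z.1 + conj_mul' z.2)
    + conj z.1 * conj z.2 * (v.1 * z.2 + z.1 * v.2) * hsqrt - 2 * conj z.2 ^ 2 * z.2 * v.2 * I_mul_I

theorem weighted_sq_norm_pos {a b : ℝ} (ha : 0 < a) (hb : 0 < b) {z : ℂ × ℂ} (hz : z ≠ 0) :
    0 < a * ‖z.1‖ ^ 2 + b * ‖z.2‖ ^ 2 := by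
  have : z.1 ≠ 0 ∨ z.2 ≠ 0 := by
    contrapose! hz
    exact Prod.ext hz.1 hz.2
  rcases this with h | h
  · have := norm_pos_iff.mpr h
    positivity
  · have := norm_pos_iff.mpr h
    positivity

/-- For every `ε ∈ (−1,1)`, every `z ∈ ℂ² \ {0}` and every `v ∈ ℂ²`:
`α_ε(π(z))(Dπ(z)·v) = (2 / ((1+ε)|z₀|² + (1−ε)|z₁|²)) · (Im(conj z₀·v₀) + Im(conj z₁·v₁))`,
where `Dπ(z)` is the real Fréchet derivative of `π` at `z`. -/
theorem pullback_alphaEps (ε : ℝ) (hε : ε ∈ Set.Ioo (-1 : ℝ) 1)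
    (z : ℂ × ℂ) (hz : z ≠ 0) (v : ℂ × ℂ) :
    alphaEps ε (brPi z) (fderiv ℝ brPi z v)
      = (2 / ((1 + ε) * ‖z.1‖ ^ 2 + (1 - ε) * ‖z.2‖ ^ 2)) *
          (((starRingEnd ℂ) z.1 * v.1).im + ((starRingEnd ℂ) z.2 * v.2).im) := by
  have hN : 0 < ‖z.1‖ ^ 2 + ‖z.2‖ ^ 2 := by
    simpa using weighted_sq_norm_pos one_pos one_pos hz
  have hW : 0 < (1 + ε) * ‖z.1‖ ^ 2 + (1 - ε) * ‖z.2‖ ^ 2 :=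
    weighted_sq_norm_pos (by linarith [hε.1]) (by linarith [hε.2]) hz
  have him := congrArg im (conj_brPi_mul_fderiv_brPi z v)
  simp only [add_im, im_ofReal_mul] at him
  rw [alphaEps, Heps_brPi, him]
  field_simp
end

section
/- The weighted rescaling map ψ intertwines the two weighted 1-forms: for every z ∈ ℂⁿ \ {0} and every v ∈ ℂⁿ, one has ∑_{j=1}^n a_j^{−1} · Im( conj(ψ(z)_j) · (Dψ(z)·v)_j ) = Q(z)^{−1} · ∑_{j=1}^n Im( conj(z_j) · v_j ), where Dψ(z) is the real Fréchet derivative of ψ at z. (That is, ψ*β₁ = β₀.) -/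
open Complex

/-- The weighted quadratic form `Q(z) = ∑_k a_k |z_k|²` on `ℂⁿ`. -/
noncomputable def Qw (n : ℕ) (a : Fin n → ℝ) (z : Fin n → ℂ) : ℝ :=
  ∑ k, a k * ‖z k‖ ^ 2

/-- The weighted rescaling map `ψ(z)_j = √(a_j / Q(z))·z_j`. -/
noncomputable def psiW (n : ℕ) (a : Fin n → ℝ) (z : Fin n → ℂ) : Fin n → ℂ :=
  fun j => ((Real.sqrt (a j / Qw n a z) : ℝ) : ℂ) * z j

/-!
Each coordinate of `ψ` is a coordinate `z_j` rescaled by the real factor `c_j = √(a_j/Q)`.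
Differentiating `c_j z_j` produces `c_j v_j` plus a term `(Dc_j v) z_j` that is a real multiple
of `z_j`, which `Im(conj(c_j z_j) · _)` does not see; hence the `j`-th term of `ψ*β₁` is
`a_j⁻¹ c_j² Im(conj z_j v_j) = Q⁻¹ Im(conj z_j v_j)`.
-/

lemma im_conj_mul_smul_add_smul (c r : ℝ) (z w : ℂ) :
    (starRingEnd ℂ ((c : ℂ) * z) * (c • w + r • z)).im = c ^ 2 * (starRingEnd ℂ z * w).im := by
  simp only [real_smul, map_mul, conj_ofReal, mul_im, mul_re, add_im, add_re, ofReal_re,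
    ofReal_im, conj_re, conj_im]
  ring

lemma im_conj_mul_fderiv_ofReal_mul {E : Type*} [NormedAddCommGroup E] [NormedSpace ℝ E]
    {c : E → ℝ} {f : E → ℂ} {x : E} (hc : DifferentiableAt ℝ c x)
    (hf : DifferentiableAt ℝ f x) (v : E) :
    (starRingEnd ℂ ((c x : ℂ) * f x) * fderiv ℝ (fun y => (c y : ℂ) * f y) x v).im
      = c x ^ 2 * (starRingEnd ℂ (f x) * fderiv ℝ f x v).im := by
  simp only [← real_smul]
  rw [fderiv_fun_smul hc hf]
  simpa using im_conj_mul_smul_add_smul (c x) (fderiv ℝ c x v) (f x) (fderiv ℝ f x v)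

lemma Qw_pos {n : ℕ} {a : Fin n → ℝ} (ha : ∀ j, 0 < a j) {z : Fin n → ℂ} (hz : z ≠ 0) :
    0 < Qw n a z := by
  obtain ⟨k, hk⟩ := Function.ne_iff.mp hz
  exact Finset.sum_pos' (fun j _ => mul_nonneg (ha j).le (by positivity))
    ⟨k, Finset.mem_univ k, mul_pos (ha k) (pow_pos (norm_pos_iff.mpr hk) 2)⟩

lemma differentiable_Qw (n : ℕ) (a : Fin n → ℝ) : Differentiable ℝ (Qw n a) := fun z =>
  DifferentiableAt.fun_sum fun k _ =>
    ((differentiableAt_apply (𝕜 := ℝ) k z).norm_sq ℝ).const_mul (a k)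

lemma differentiableAt_sqrt_div_Qw {n : ℕ} {a : Fin n → ℝ} (ha : ∀ j, 0 < a j)
    {z : Fin n → ℂ} (hz : z ≠ 0) (j : Fin n) :
    DifferentiableAt ℝ (fun w => Real.sqrt (a j / Qw n a w)) z := by
  have hQ := Qw_pos ha hz
  have hdiv : DifferentiableAt ℝ (fun w => a j / Qw n a w) z := by
    simpa only [div_eq_mul_inv] using ((differentiable_Qw n a z).fun_inv hQ.ne').const_mul (a j)
  exact hdiv.sqrt (div_pos (ha j) hQ).ne'

lemma fderiv_psiW_apply {n : ℕ} {a : Fin n → ℝ} (ha : ∀ j, 0 < a j) {z : Fin n → ℂ}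
    (hz : z ≠ 0) (v : Fin n → ℂ) (j : Fin n) :
    fderiv ℝ (psiW n a) z v j
      = fderiv ℝ (fun w => (Real.sqrt (a j / Qw n a w) : ℂ) * w j) z v := by
  have hψ (i : Fin n) :
      DifferentiableAt ℝ (fun w => (Real.sqrt (a i / Qw n a w) : ℂ) * w i) z :=
    (ofRealCLM.differentiableAt.comp z (differentiableAt_sqrt_div_Qw ha hz i)).mul
      (differentiableAt_apply i z)
  rw [show psiW n a = fun w i => (Real.sqrt (a i / Qw n a w) : ℂ) * w i from rfl,
    fderiv_pi hψ]
  rfl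

theorem psiW_pullback_general (n : ℕ) (a : Fin n → ℝ) (ha : ∀ j, 0 < a j)
    (z : Fin n → ℂ) (hz : z ≠ 0) (v : Fin n → ℂ) :
    ∑ j, (a j)⁻¹ * ((starRingEnd ℂ) (psiW n a z j) * fderiv ℝ (psiW n a) z v j).im
      = (Qw n a z)⁻¹ * ∑ j, ((starRingEnd ℂ) (z j) * v j).im := by
  rw [Finset.mul_sum]
  refine Finset.sum_congr rfl fun j _ => ?_
  have hcoord := hasFDerivAt_apply (𝕜 := ℝ) j z
  rw [fderiv_psiW_apply ha hz, psiW,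
    im_conj_mul_fderiv_ofReal_mul (differentiableAt_sqrt_div_Qw ha hz j) hcoord.differentiableAt,
    hcoord.fderiv, ContinuousLinearMap.proj_apply, Real.sq_sqrt (div_pos (ha j) (Qw_pos ha hz)).le]
  field_simp [(ha j).ne']

/-- The weighted rescaling map `ψ` intertwines the two weighted `1`-forms: for every
`z ∈ ℂⁿ \ {0}` and every `v ∈ ℂⁿ`,
`∑_j a_j⁻¹·Im(conj(ψ(z)_j)·(Dψ(z)·v)_j) = Q(z)⁻¹·∑_j Im(conj(z_j)·v_j)`,
i.e. `ψ*β₁ = β₀`. -/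
theorem psiW_pullback (n : ℕ) (hn : 1 ≤ n) (a : Fin n → ℝ) (ha : ∀ j, 0 < a j)
    (z : Fin n → ℂ) (hz : z ≠ 0) (v : Fin n → ℂ) :
    ∑ j, (a j)⁻¹ * ((starRingEnd ℂ) (psiW n a z j) * fderiv ℝ (psiW n a) z v j).im
      = (Qw n a z)⁻¹ * ∑ j, ((starRingEnd ℂ) (z j) * v j).im :=
  psiW_pullback_general n a ha z hz v
end
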